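/- On an N×N periodic square lattice, if two Wilson lines w₁ and w₂ cross the lattice in the same direction starting from two different base points, and all plaquette holonomies are trivial, then w₂ = c w₁ c⁻¹ where c is the Wilson line along a path connecting the base point of w₁ to that of w₂. -/

import Mathlib

/-!  Lattice gauge theory on the N×N periodic square lattice (discrete torus),
with vertices `ZMod N × ZMod N`.  A path is a list of steps `(μ, b)`: from `x`,
if `b = true` move to `x + e μ` picking up `U μ x`; if `b = false` move to
`x - e μ` picking up `(U μ (x - e μ))⁻¹`. -/

/-- Endpoint of a path starting at `x`. -/
def pathEnd {Vt : Type*} [AddGroup Vt] (e : Fin 2 → Vt) (x : Vt) :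
    List (Fin 2 × Bool) → Vt
  | [] => x
  | (μ, b) :: γ => pathEnd e (if b then x + e μ else x - e μ) γ

/-- The Wilson line of the gauge field `U` along a path starting at `x`. -/
def wline {G Vt : Type*} [Group G] [AddGroup Vt] (e : Fin 2 → Vt)
    (U : Fin 2 → Vt → G) (x : Vt) : List (Fin 2 × Bool) → G
  | [] => 1
  | (μ, b) :: γ =>
      if b then wline e U (x + e μ) γ * U μ x
      else wline e U (x - e μ) γ * (U μ (x - e μ))⁻¹

/-- The plaquette holonomy (field strength) based at the vertex `x`. -/
def plaq {G Vt : Type*} [Group G] [AddGroup Vt] (e : Fin 2 → Vt)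
    (U : Fin 2 → Vt → G) (x : Vt) : G :=
  (U 1 x)⁻¹ * (U 0 (x + e 1))⁻¹ * U 1 (x + e 0) * U 0 x


/-- Signed winding number of a path in the direction `μ`. -/
def wind (μ : Fin 2) (γ : List (Fin 2 × Bool)) : ℤ :=
  (γ.count (μ, true) : ℤ) - (γ.count (μ, false) : ℤ)

/-!
Lift the gauge field to the universal cover `ℤ²` of the torus. There it is still flat, and a
flat field on the simply connected lattice `ℤ²` is a pure gauge, `V μ z = g (z + e μ) (g z)⁻¹`,
so every Wilson line is `g (end) (g start)⁻¹`. If `z₁, z₂` lift the base points and `w` is the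
common winding vector, then `w₂ = g (z₂ + w) (g z₂)⁻¹` and `w₁ = g (z₁ + w) (g z₁)⁻¹`, while a
path `δ` from `x₁` to `x₂` has Wilson line `c` equal both to `g z₂ (g z₁)⁻¹` and to
`g (z₂ + w) (g (z₁ + w))⁻¹`, since `z₁` and `z₁ + w` both lie over `x₁`. Using one expression
for `c` and the other for `c⁻¹` gives `c w₁ c⁻¹ = w₂`.
-/

open Function

section Gauge

variable {G Vt Wt : Type*} [Group G] [AddGroup Vt] [AddGroup Wt]

theorem wline_eq_of_pureGauge {e : Fin 2 → Vt} {U : Fin 2 → Vt → G} {g : Vt → G}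
    (hg : ∀ μ x, U μ x = g (x + e μ) * (g x)⁻¹) (x : Vt) (γ : List (Fin 2 × Bool)) :
    wline e U x γ = g (pathEnd e x γ) * (g x)⁻¹ := by
  induction γ generalizing x with
  | nil => simp [wline, pathEnd]
  | cons s γ ih =>
    obtain ⟨μ, _ | _⟩ := s
    · have hμ := hg μ (x - e μ)
      rw [sub_add_cancel] at hμ
      simp only [wline, pathEnd, Bool.false_eq_true, if_false, ih, hμ]
      group
    · simp only [wline, pathEnd, if_true, ih, hg]
      group

theorem pathEnd_map (φ : Vt →+ Wt) (e : Fin 2 → Vt) (x : Vt) (γ : List (Fin 2 × Bool)) :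
    pathEnd (φ ∘ e) (φ x) γ = φ (pathEnd e x γ) := by
  induction γ generalizing x with
  | nil => rfl
  | cons s γ ih =>
    obtain ⟨μ, _ | _⟩ := s <;> simp [pathEnd, ← ih]

theorem wline_map (φ : Vt →+ Wt) (e : Fin 2 → Vt) (U : Fin 2 → Wt → G) (x : Vt)
    (γ : List (Fin 2 × Bool)) :
    wline (φ ∘ e) U (φ x) γ = wline e (fun μ => U μ ∘ φ) x γ := by
  induction γ generalizing x with
  | nil => rfl
  | cons s γ ih =>
    obtain ⟨μ, _ | _⟩ := s <;> simp [wline, ← ih]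

theorem plaq_map (φ : Vt →+ Wt) (e : Fin 2 → Vt) (U : Fin 2 → Wt → G) (x : Vt) :
    plaq (φ ∘ e) U (φ x) = plaq e (fun μ => U μ ∘ φ) x := by
  simp [plaq]

theorem plaq_eq_one_iff {e : Fin 2 → Vt} {U : Fin 2 → Vt → G} {x : Vt} :
    plaq e U x = 1 ↔ U 0 (x + e 1) * U 1 x = U 1 (x + e 0) * U 0 x := by
  have h : plaq e U x = (U 0 (x + e 1) * U 1 x)⁻¹ * (U 1 (x + e 0) * U 0 x) := by
    simp only [plaq]
    group
  rw [h, inv_mul_eq_one]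

end Gauge

section IntPotential

variable {G : Type*} [Group G]

/-- The solution of `h (n + 1) = f n * h n` with `h 0 = 1`. -/
def intPotential (f : ℤ → G) (n : ℤ) : G :=
  Int.inductionOn' (motive := fun _ => G) n 0 1 (fun k _ g => f k * g)
    (fun k _ g => (f (k - 1))⁻¹ * g)

theorem intPotential_zero (f : ℤ → G) : intPotential f 0 = 1 :=
  Int.inductionOn'_self

theorem intPotential_add_one (f : ℤ → G) (n : ℤ) :
    intPotential f (n + 1) = f n * intPotential f n := by
  rcases le_or_gt 0 n with hn | hn
  · exact Int.inductionOn'_add_one hn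
  · have h := Int.inductionOn'_sub_one (motive := fun _ => G) (b := 0) (zero := 1)
      (succ := fun k _ g => f k * g) (pred := fun k _ g => (f (k - 1))⁻¹ * g)
      (show n + 1 ≤ 0 by omega)
    simp only [add_sub_cancel_right] at h
    simp only [intPotential, h]
    group

theorem eq_intPotential_mul {f k : ℤ → G} (hk : ∀ n, k (n + 1) = f n * k n) (n : ℤ) :
    k n = intPotential f n * k 0 := by
  induction n using Int.induction_on with
  | zero => rw [intPotential_zero, one_mul]
  | succ n ih => rw [hk, ih, intPotential_add_one, mul_assoc]
  | pred n ih =>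
    have hstep := hk (-n - 1)
    have hpot := intPotential_add_one f (-n - 1)
    rw [sub_add_cancel] at hstep hpot
    rw [ih, hpot, mul_assoc] at hstep
    exact (mul_left_cancel hstep).symm

end IntPotential

section Plane

variable {G : Type*} [Group G]

def basisZ2 : Fin 2 → ℤ × ℤ := ![(1, 0), (0, 1)]

def windVec (γ : List (Fin 2 × Bool)) : ℤ × ℤ := (wind 0 γ, wind 1 γ)

theorem windVec_cons (μ : Fin 2) (b : Bool) (γ : List (Fin 2 × Bool)) :
    windVec ((μ, b) :: γ) = (if b then basisZ2 μ else -basisZ2 μ) + windVec γ := by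
  fin_cases μ <;> cases b <;>
    simp [windVec, wind, basisZ2, Prod.ext_iff] <;> ring

theorem pathEnd_basisZ2 (z : ℤ × ℤ) (γ : List (Fin 2 × Bool)) :
    pathEnd basisZ2 z γ = z + windVec γ := by
  induction γ generalizing z with
  | nil => simp [pathEnd, windVec, wind]
  | cons s γ ih =>
    obtain ⟨μ, _ | _⟩ := s <;> simp [pathEnd, ih, windVec_cons, sub_eq_add_neg, add_assoc]

theorem exists_windVec_eq (z : ℤ × ℤ) : ∃ δ, windVec δ = z := by
  have line : ∀ μ z (n : ℤ), (∃ δ, windVec δ = z) → ∃ δ, windVec δ = z + n • basisZ2 μ := by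
    intro μ z n ⟨δ, hδ⟩
    induction n using Int.induction_on with
    | zero => exact ⟨δ, by simp [hδ]⟩
    | succ n ih =>
      obtain ⟨δ', hδ'⟩ := ih
      exact ⟨(μ, true) :: δ', by simp [windVec_cons, hδ', add_smul]; abel⟩
    | pred n ih =>
      obtain ⟨δ', hδ'⟩ := ih
      exact ⟨(μ, false) :: δ', by simp [windVec_cons, hδ', sub_smul]; abel⟩
  obtain ⟨a, b⟩ := z
  simpa [basisZ2] using line 1 _ b (line 0 0 a ⟨[], rfl⟩)

/-- `g (a, b)` is the transport from `(0, 0)` along the axis to `(a, 0)` and then vertically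
to `(a, b)`; flatness is what makes it compatible with horizontal steps off the axis. -/
theorem exists_pureGauge_of_flat {V : Fin 2 → ℤ × ℤ → G}
    (hV : ∀ z, plaq basisZ2 V z = 1) :
    ∃ g : ℤ × ℤ → G, ∀ μ z, V μ z = g (z + basisZ2 μ) * (g z)⁻¹ := by
  have rung : ∀ a b, intPotential (fun b => V 1 (a + 1, b)) b * V 0 (a, 0) =
      V 0 (a, b) * intPotential (fun b => V 1 (a, b)) b := by
    intro a b
    have hk : ∀ b, V 0 (a, b + 1) * intPotential (fun b => V 1 (a, b)) (b + 1) =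
        V 1 (a + 1, b) * (V 0 (a, b) * intPotential (fun b => V 1 (a, b)) b) := by
      intro b
      have hflat := plaq_eq_one_iff.mp (hV (a, b))
      simp only [basisZ2, Matrix.cons_val_zero, Matrix.cons_val_one, Prod.mk_add_mk, add_zero]
        at hflat
      rw [intPotential_add_one, ← mul_assoc, hflat, mul_assoc]
    have := eq_intPotential_mul (k := fun b => V 0 (a, b) * intPotential (fun b => V 1 (a, b)) b)
      hk b
    rw [intPotential_zero, mul_one] at this
    exact this.symm
  refine ⟨fun z => intPotential (fun b => V 1 (z.1, b)) z.2 *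
    intPotential (fun a => V 0 (a, 0)) z.1,
    fun μ ⟨a, b⟩ => eq_mul_inv_iff_mul_eq.mpr ?_⟩
  fin_cases μ
  · simp [basisZ2, intPotential_add_one, ← mul_assoc, rung]
  · simp [basisZ2, intPotential_add_one, mul_assoc]

end Plane

section Torus

variable {G : Type*} [Group G] {N : ℕ}

def torusProj (N : ℕ) : ℤ × ℤ →+ ZMod N × ZMod N :=
  (Int.castAddHom (ZMod N)).prodMap (Int.castAddHom (ZMod N))

theorem torusProj_surjective : Surjective (torusProj N) :=
  ZMod.intCast_surjective.prodMap ZMod.intCast_surjective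

theorem torusProj_comp_basisZ2 : torusProj N ∘ basisZ2 = ![(1, 0), (0, 1)] := by
  ext μ : 1
  fin_cases μ <;> simp [torusProj, basisZ2]

theorem pathEnd_torusProj (z : ℤ × ℤ) (γ : List (Fin 2 × Bool)) :
    pathEnd ![(1, 0), (0, 1)] (torusProj N z) γ = torusProj N (z + windVec γ) := by
  rw [← torusProj_comp_basisZ2, pathEnd_map, pathEnd_basisZ2]

theorem exists_wline_torusProj_eq {U : Fin 2 → ZMod N × ZMod N → G}
    (hflat : ∀ p, plaq ![(1, 0), (0, 1)] U p = 1) :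
    ∃ g : ℤ × ℤ → G, ∀ z γ,
      wline ![(1, 0), (0, 1)] U (torusProj N z) γ = g (z + windVec γ) * (g z)⁻¹ := by
  obtain ⟨g, hg⟩ := exists_pureGauge_of_flat (V := fun μ => U μ ∘ torusProj N) fun z => by
    rw [← plaq_map, torusProj_comp_basisZ2]
    exact hflat _
  refine ⟨g, fun z γ => ?_⟩
  rw [← torusProj_comp_basisZ2, wline_map, wline_eq_of_pureGauge hg, pathEnd_basisZ2]

end Torus

theorem wilson_loops_conjugate_of_different_basepoints_general {G : Type*} [Group G] {N : ℕ}
    (e : Fin 2 → ZMod N × ZMod N) (he : e = ![(1, 0), (0, 1)])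
    (U : Fin 2 → ZMod N × ZMod N → G)
    (hflat : ∀ p : ZMod N × ZMod N, plaq e U p = 1)
    (x₁ x₂ : ZMod N × ZMod N) (γ₁ γ₂ : List (Fin 2 × Bool))
    (hloop₁ : pathEnd e x₁ γ₁ = x₁)
    (hwind : ∀ μ : Fin 2, wind μ γ₁ = wind μ γ₂) :
    ∃ δ : List (Fin 2 × Bool), pathEnd e x₁ δ = x₂ ∧
      wline e U x₂ γ₂ =
        wline e U x₁ δ * wline e U x₁ γ₁ * (wline e U x₁ δ)⁻¹ := by
  subst he
  obtain ⟨g, hg⟩ := exists_wline_torusProj_eq hflat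
  obtain ⟨z₁, rfl⟩ := torusProj_surjective x₁
  obtain ⟨z₂, rfl⟩ := torusProj_surjective x₂
  obtain ⟨δ, hδ⟩ := exists_windVec_eq (z₂ - z₁)
  set w := windVec γ₁
  have hw : windVec γ₂ = w := by simp [w, windVec, hwind]
  have hlift : torusProj N (z₁ + w) = torusProj N z₁ := by
    rw [← pathEnd_torusProj, hloop₁]
  have hc : wline ![(1, 0), (0, 1)] U (torusProj N z₁) δ = g z₂ * (g z₁)⁻¹ := by
    rw [hg, hδ, add_sub_cancel]
  have hc' : wline ![(1, 0), (0, 1)] U (torusProj N z₁) δ = g (z₂ + w) * (g (z₁ + w))⁻¹ := by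
    rw [← hlift, hg, hδ, show z₁ + w + (z₂ - z₁) = z₂ + w by abel]
  refine ⟨δ, by rw [pathEnd_torusProj, hδ, add_sub_cancel], ?_⟩
  calc wline ![(1, 0), (0, 1)] U (torusProj N z₂) γ₂ = g (z₂ + w) * (g z₂)⁻¹ := by rw [hg, hw]
    _ = g (z₂ + w) * (g (z₁ + w))⁻¹ * (g (z₁ + w) * (g z₁)⁻¹) * (g z₂ * (g z₁)⁻¹)⁻¹ := by group
    _ = _ := by rw [← hc', ← hg, ← hc]

/-- On the N×N periodic lattice with trivial plaquette
holonomy everywhere, two Wilson loops `w₁`, `w₂` winding the torus in the same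
homology class but based at different vertices are conjugate: `w₂ = c w₁ c⁻¹`,
where `c` is the Wilson line along some path connecting the base point of `w₁`
to that of `w₂`. -/
theorem wilson_loops_conjugate_of_different_basepoints {G : Type*} [Group G] {N : ℕ}
    (e : Fin 2 → ZMod N × ZMod N) (he : e = ![(1, 0), (0, 1)])
    (U : Fin 2 → ZMod N × ZMod N → G)
    (hflat : ∀ p : ZMod N × ZMod N, plaq e U p = 1)
    (x₁ x₂ : ZMod N × ZMod N) (γ₁ γ₂ : List (Fin 2 × Bool))
    (hloop₁ : pathEnd e x₁ γ₁ = x₁) (hloop₂ : pathEnd e x₂ γ₂ = x₂)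
    (hwind : ∀ μ : Fin 2, wind μ γ₁ = wind μ γ₂) :
    ∃ δ : List (Fin 2 × Bool), pathEnd e x₁ δ = x₂ ∧
      wline e U x₂ γ₂ =
        wline e U x₁ δ * wline e U x₁ γ₁ * (wline e U x₁ δ)⁻¹ :=
  wilson_loops_conjugate_of_different_basepoints_general e he U hflat x₁ x₂ γ₁ γ₂ hloop₁ hwind
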